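/- arXiv:2312.16704 — 3 statements merged into one kernel-verified Lean document; each statement's English description precedes it below -/
import Mathlib

section
/- Let T be a D-convex left-continuous t-norm, I its residual implicator, μ a monotone measure on a finite nonempty set X, and R a T-equivalence relation on X. For every fuzzy set A on X, the Choquet lower approximation L(y) = ∫ I(R(x,y), A(x)) dμ(x) is a fixed point of the classical lower approximation: min_{x∈X} I(R(x,y), L(x)) = L(y) for every y ∈ X. -/
structure IsTNorm (T : ℝ → ℝ → ℝ) : Prop where
  maps_to : ∀ x ∈ Set.Icc (0:ℝ) 1, ∀ y ∈ Set.Icc (0:ℝ) 1, T x y ∈ Set.Icc (0:ℝ) 1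
  comm : ∀ x ∈ Set.Icc (0:ℝ) 1, ∀ y ∈ Set.Icc (0:ℝ) 1, T x y = T y x
  assoc : ∀ x ∈ Set.Icc (0:ℝ) 1, ∀ y ∈ Set.Icc (0:ℝ) 1, ∀ z ∈ Set.Icc (0:ℝ) 1,
      T (T x y) z = T x (T y z)
  mono : ∀ x₁ ∈ Set.Icc (0:ℝ) 1, ∀ x₂ ∈ Set.Icc (0:ℝ) 1, ∀ y₁ ∈ Set.Icc (0:ℝ) 1,
      ∀ y₂ ∈ Set.Icc (0:ℝ) 1, x₁ ≤ x₂ → y₁ ≤ y₂ → T x₁ y₁ ≤ T x₂ y₂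
  one_left : ∀ x ∈ Set.Icc (0:ℝ) 1, T 1 x = x

/-- `T` is left-continuous: it commutes with suprema of nonempty subsets of `[0,1]`
in each (equivalently, by commutativity, the second) argument. -/
def LeftContinuousTNorm (T : ℝ → ℝ → ℝ) : Prop :=
  ∀ x ∈ Set.Icc (0:ℝ) 1, ∀ S : Set ℝ, S.Nonempty → S ⊆ Set.Icc (0:ℝ) 1 →
    T x (sSup S) = sSup (T x '' S)

/-- The residual implicator of `T`: `I(x,y) = sup {λ ∈ [0,1] | T(x,λ) ≤ y}`. -/
noncomputable def resid (T : ℝ → ℝ → ℝ) (x y : ℝ) : ℝ :=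
  sSup {l | l ∈ Set.Icc (0:ℝ) 1 ∧ T x l ≤ y}

/-- `T` is D-convex: convex in each argument separately on `[0,1]`. -/
def DConvex (T : ℝ → ℝ → ℝ) : Prop :=
  ∀ a ∈ Set.Icc (0:ℝ) 1, ∀ b ∈ Set.Icc (0:ℝ) 1, ∀ y ∈ Set.Icc (0:ℝ) 1, ∀ w ∈ Set.Icc (0:ℝ) 1,
    T (w * a + (1 - w) * b) y ≤ w * T a y + (1 - w) * T b y ∧
    T y (w * a + (1 - w) * b) ≤ w * T y a + (1 - w) * T y b

/-- `R` is a `T`-equivalence relation: a `[0,1]`-valued reflexive, symmetric and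
`T`-transitive fuzzy relation. -/
structure IsTEquiv {X : Type*} (T : ℝ → ℝ → ℝ) (R : X → X → ℝ) : Prop where
  mem : ∀ x y, R x y ∈ Set.Icc (0:ℝ) 1
  refl : ∀ x, R x x = 1
  symm : ∀ x y, R x y = R y x
  trans : ∀ x y z, T (R x y) (R y z) ≤ R x z

/-- A monotone measure on a finite set `X`. -/
structure IsMonotoneMeasure {X : Type*} (μ : Set X → ℝ) : Prop where
  empty : μ ∅ = 0
  univ : μ Set.univ = 1
  mono : ∀ E F : Set X, E ⊆ F → μ E ≤ μ F

/-- The Choquet integral of `f : X → ℝ` w.r.t. `μ` on the finite set `X`: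
`∑ i, f(x*_i) · (μ(A*_i) − μ(A*_{i+1}))` where `x*` enumerates `X` with
`f(x*_1) ≤ … ≤ f(x*_n)` and `A*_i = {x*_i, …, x*_n}` (so `A*_{n+1} = ∅` and `μ ∅ = 0`). -/
noncomputable def choquet {X : Type*} [Fintype X] (μ : Set X → ℝ) (f : X → ℝ) : ℝ :=
  let e : Fin (Fintype.card X) ≃ X := (Fintype.equivFin X).symm
  let σ : Equiv.Perm (Fin (Fintype.card X)) := Tuple.sort (f ∘ e)
  ∑ i : Fin (Fintype.card X),
    f (e (σ i)) * (μ {x | ∃ j, i ≤ j ∧ e (σ j) = x} - μ {x | ∃ j, i < j ∧ e (σ j) = x})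

/-! By residuation (`c ≤ I(x, y) ↔ T(x, c) ≤ y`, which needs left-continuity), the inequality
`L y ≤ I(R(x, y), L x)` becomes `T(R(x, y), L y) ≤ L x`, and pointwise
`T(R(x, y), I(R(x', y), A x')) ≤ I(R(x', x), A x')` by `T`-transitivity. To move `T(a, ·)` inside
the Choquet integral we use Jensen's inequality: along an enumeration sorting `f`, the Choquet
integral is a convex combination of the values of `f`, and the same enumeration sorts
`T(a, ·) ∘ f` because `T(a, ·)` is monotone. Monotonicity of the Choquet integral comes from the
layer-cake formula `∫ f dμ = ∫₀¹ μ {f ≥ t} dt`. The reverse inequality is the term `x = y`,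
since `R(y, y) = 1` and `I(1, ·)` is the identity. -/

open Finset MeasureTheory

section Choquet

variable {X : Type*}

def tailSet {n : ℕ} (v : Fin n → X) (k : ℕ) : Set X :=
  {x | ∃ j : Fin n, k ≤ (j : ℕ) ∧ v j = x}

def choquetWeight (μ : Set X → ℝ) {n : ℕ} (v : Fin n → X) (i : Fin n) : ℝ :=
  μ (tailSet v i) - μ (tailSet v (i + 1))

noncomputable def choquetSum (μ : Set X → ℝ) (f : X → ℝ) {n : ℕ} (v : Fin n → X) : ℝ :=
  ∑ i, f (v i) * choquetWeight μ v i

lemma tailSet_succ_subset {n : ℕ} (v : Fin n → X) (k : ℕ) : tailSet v (k + 1) ⊆ tailSet v k :=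
  fun _ ⟨j, hj, hjx⟩ => ⟨j, (Nat.le_succ k).trans hj, hjx⟩

lemma tailSet_eq_insert {n : ℕ} (v : Fin n → X) (i : Fin n) :
    tailSet v i = insert (v i) (tailSet v (i + 1)) := by
  ext x
  simp only [tailSet, Set.mem_ofPred_eq, Set.mem_insert_iff]
  constructor
  · rintro ⟨j, hij, rfl⟩
    rcases hij.eq_or_lt with h | h
    · exact Or.inl (congrArg v (Fin.ext h.symm))
    · exact Or.inr ⟨j, h, rfl⟩
  · rintro (rfl | ⟨j, hij, rfl⟩)
    · exact ⟨i, le_rfl, rfl⟩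
    · exact ⟨j, (Nat.le_succ _).trans hij, rfl⟩

lemma tailSet_zero {n : ℕ} {v : Fin n → X} (hv : Function.Surjective v) :
    tailSet v 0 = Set.univ :=
  Set.eq_univ_of_forall fun x => (hv x).elim fun j hj => ⟨j, Nat.zero_le _, hj⟩

lemma tailSet_self {n : ℕ} (v : Fin n → X) : tailSet v n = ∅ :=
  Set.eq_empty_of_forall_notMem fun _ ⟨j, hj, _⟩ => absurd j.isLt (by omega)

lemma sum_choquetWeight_eq (ν : Set X → ℝ) {n : ℕ} (v : Fin n → X) :
    ∑ i, choquetWeight ν v i = ν (tailSet v 0) - ν ∅ := by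
  rw [← tailSet_self v, ← sum_range_sub' (fun k => ν (tailSet v k))]
  exact Fin.sum_univ_eq_sum_range (fun k => ν (tailSet v k) - ν (tailSet v (k + 1))) n

lemma ite_choquetWeight_eq {μ : Set X → ℝ} {f : X → ℝ} {n : ℕ} {v : Fin n → X}
    (hfv : Monotone (f ∘ v)) (t : ℝ) (i : Fin n) :
    (if t ≤ f (v i) then choquetWeight μ v i else 0) =
      choquetWeight (fun E => μ (E ∩ {x | t ≤ f x})) v i := by
  simp only [choquetWeight]
  split_ifs with ht
  · have hsub : tailSet v i ⊆ {x | t ≤ f x} := by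
      rintro _ ⟨j, hij, rfl⟩
      exact ht.trans (hfv (Fin.mk_le_mk.mpr hij))
    rw [Set.inter_eq_left.mpr hsub,
      Set.inter_eq_left.mpr ((tailSet_succ_subset v i).trans hsub)]
  · rw [tailSet_eq_insert, Set.insert_inter_of_notMem (show v i ∉ {x | t ≤ f x} from ht),
      sub_self]

lemma intervalIntegral_ite_le {c : ℝ} (hc : c ∈ Set.Icc (0:ℝ) 1) (w : ℝ) :
    ∫ t in (0:ℝ)..1, (if t ≤ c then w else 0) = c * w := by
  have hind : (fun t : ℝ => if t ≤ c then w else 0) = (Set.Iic c).indicator fun _ => w := by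
    ext t; simp [Set.indicator_apply]
  rw [hind, intervalIntegral.integral_of_le zero_le_one,
    integral_indicator_const w measurableSet_Iic, measureReal_restrict_apply measurableSet_Iic,
    Set.Iic_inter_Ioc_of_le hc.2, Real.volume_real_Ioc_of_le hc.1, sub_zero, smul_eq_mul]

noncomputable def sortEnum [Fintype X] (f : X → ℝ) : Fin (Fintype.card X) → X :=
  fun i => (Fintype.equivFin X).symm (Tuple.sort (f ∘ (Fintype.equivFin X).symm) i)

lemma sortEnum_surjective [Fintype X] (f : X → ℝ) : Function.Surjective (sortEnum f) :=
  ((Tuple.sort (f ∘ (Fintype.equivFin X).symm)).trans (Fintype.equivFin X).symm).surjective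

lemma monotone_sortEnum [Fintype X] (f : X → ℝ) : Monotone (f ∘ sortEnum f) :=
  Tuple.monotone_sort (f ∘ (Fintype.equivFin X).symm)

lemma choquet_eq_choquetSum [Fintype X] (μ : Set X → ℝ) (f : X → ℝ) :
    choquet μ f = choquetSum μ f (sortEnum f) := by
  refine Finset.sum_congr rfl fun i _ => ?_
  have hle : {x | ∃ j, i ≤ j ∧ sortEnum f j = x} = tailSet (sortEnum f) i := by
    simp only [tailSet, Fin.le_def]
  have hlt : {x | ∃ j, i < j ∧ sortEnum f j = x} = tailSet (sortEnum f) (i + 1) := by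
    simp only [tailSet, Fin.lt_def, Nat.add_one_le_iff]
  exact congrArg _ (congrArg₂ _ (congrArg μ hle) (congrArg μ hlt))

variable {μ : Set X → ℝ} (hμ : IsMonotoneMeasure μ)
include hμ

lemma IsMonotoneMeasure.nonneg (E : Set X) : 0 ≤ μ E :=
  hμ.empty ▸ hμ.mono ∅ E (Set.empty_subset E)

lemma IsMonotoneMeasure.le_one (E : Set X) : μ E ≤ 1 :=
  hμ.univ ▸ hμ.mono E Set.univ (Set.subset_univ E)

lemma IsMonotoneMeasure.antitone_levelSet (f : X → ℝ) :
    Antitone fun t => μ {x | t ≤ f x} :=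
  fun _ _ hst => hμ.mono _ _ fun _ hx => hst.trans hx

lemma choquetWeight_nonneg {n : ℕ} (v : Fin n → X) (i : Fin n) : 0 ≤ choquetWeight μ v i :=
  sub_nonneg.mpr (hμ.mono _ _ (tailSet_succ_subset v i))

lemma sum_choquetWeight {n : ℕ} {v : Fin n → X} (hv : Function.Surjective v) :
    ∑ i, choquetWeight μ v i = 1 := by
  rw [sum_choquetWeight_eq, tailSet_zero hv, hμ.univ, hμ.empty, sub_zero]

/-- Layer-cake formula: summing along any enumeration that sorts `f` gives
`∫₀¹ μ {f ≥ t} dt`, which no longer depends on the enumeration. -/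
lemma choquetSum_eq_intervalIntegral {f : X → ℝ} (hf : ∀ x, f x ∈ Set.Icc (0:ℝ) 1)
    {n : ℕ} {v : Fin n → X} (hv : Function.Surjective v) (hfv : Monotone (f ∘ v)) :
    choquetSum μ f v = ∫ t in (0:ℝ)..1, μ {x | t ≤ f x} := by
  have hint : ∀ i, IntervalIntegrable
      (fun t => if t ≤ f (v i) then choquetWeight μ v i else 0) volume 0 1 := fun i =>
    Antitone.intervalIntegrable fun s t hst => by
      have := choquetWeight_nonneg hμ v i
      split_ifs <;> first | exact le_rfl | exact this | linarith
  calc choquetSum μ f v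
      = ∑ i, ∫ t in (0:ℝ)..1, (if t ≤ f (v i) then choquetWeight μ v i else 0) := by
        simp only [choquetSum, intervalIntegral_ite_le (hf _)]
    _ = ∫ t in (0:ℝ)..1, ∑ i, (if t ≤ f (v i) then choquetWeight μ v i else 0) :=
        (intervalIntegral.integral_finsetSum fun i _ => hint i).symm
    _ = ∫ t in (0:ℝ)..1, μ {x | t ≤ f x} := by
        refine intervalIntegral.integral_congr fun t _ => ?_
        simp only [ite_choquetWeight_eq hfv, sum_choquetWeight_eq, tailSet_zero hv,
          Set.univ_inter, Set.empty_inter, hμ.empty, sub_zero]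

variable [Fintype X]

lemma choquet_eq_intervalIntegral {f : X → ℝ} (hf : ∀ x, f x ∈ Set.Icc (0:ℝ) 1) :
    choquet μ f = ∫ t in (0:ℝ)..1, μ {x | t ≤ f x} := by
  rw [choquet_eq_choquetSum]
  exact choquetSum_eq_intervalIntegral hμ hf (sortEnum_surjective f) (monotone_sortEnum f)

lemma choquet_mono {f g : X → ℝ} (hf : ∀ x, f x ∈ Set.Icc (0:ℝ) 1)
    (hg : ∀ x, g x ∈ Set.Icc (0:ℝ) 1) (hfg : f ≤ g) : choquet μ f ≤ choquet μ g := by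
  rw [choquet_eq_intervalIntegral hμ hf, choquet_eq_intervalIntegral hμ hg]
  exact intervalIntegral.integral_mono_on zero_le_one
    (hμ.antitone_levelSet f).intervalIntegrable (hμ.antitone_levelSet g).intervalIntegrable
    fun t _ => hμ.mono _ _ fun x hx => le_trans hx (hfg x)

lemma choquet_mem_Icc {f : X → ℝ} (hf : ∀ x, f x ∈ Set.Icc (0:ℝ) 1) :
    choquet μ f ∈ Set.Icc (0:ℝ) 1 := by
  rw [choquet_eq_intervalIntegral hμ hf]
  refine ⟨intervalIntegral.integral_nonneg zero_le_one fun t _ => hμ.nonneg _, ?_⟩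
  calc ∫ t in (0:ℝ)..1, μ {x | t ≤ f x} ≤ ∫ _ in (0:ℝ)..1, (1:ℝ) :=
        intervalIntegral.integral_mono_on zero_le_one
          (hμ.antitone_levelSet f).intervalIntegrable intervalIntegrable_const
          fun t _ => hμ.le_one _
    _ = 1 := by simp

/-- Since `φ` is monotone, the enumeration sorting `f` also sorts `φ ∘ f`, so both Choquet
integrals are sums with the same convex weights and Jensen's inequality applies. -/
lemma ConvexOn.map_choquet_le {φ : ℝ → ℝ} (hφ : ConvexOn ℝ (Set.Icc 0 1) φ)
    (hφm : MonotoneOn φ (Set.Icc 0 1)) (hφI : Set.MapsTo φ (Set.Icc 0 1) (Set.Icc 0 1))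
    {f : X → ℝ} (hf : ∀ x, f x ∈ Set.Icc (0:ℝ) 1) :
    φ (choquet μ f) ≤ choquet μ (φ ∘ f) := by
  set v := sortEnum f
  have hφfv : Monotone (φ ∘ f ∘ v) := fun i j hij =>
    hφm (hf _) (hf _) (monotone_sortEnum f hij)
  calc φ (choquet μ f)
      = φ (∑ i, choquetWeight μ v i • f (v i)) := by
        simp only [choquet_eq_choquetSum, choquetSum, smul_eq_mul, mul_comm]; rfl
    _ ≤ ∑ i, choquetWeight μ v i • φ (f (v i)) :=
        hφ.map_sum_le (fun i _ => choquetWeight_nonneg hμ v i)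
          (sum_choquetWeight hμ (sortEnum_surjective f)) fun i _ => hf _
    _ = choquetSum μ (φ ∘ f) v := by
        simp only [choquetSum, Function.comp_apply, smul_eq_mul, mul_comm]
    _ = choquet μ (φ ∘ f) := by
        rw [choquetSum_eq_intervalIntegral (f := φ ∘ f) hμ (fun x => hφI (hf x))
          (sortEnum_surjective f) hφfv, choquet_eq_intervalIntegral (f := φ ∘ f) hμ fun x => hφI (hf x)]

end Choquet

section TNorm

variable {T : ℝ → ℝ → ℝ}

lemma bddAbove_residSet (x y : ℝ) : BddAbove {l | l ∈ Set.Icc (0:ℝ) 1 ∧ T x l ≤ y} :=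
  ⟨1, fun _ hl => hl.1.2⟩

lemma DConvex.convexOn_right (hTconv : DConvex T) {a : ℝ} (ha : a ∈ Set.Icc (0:ℝ) 1) :
    ConvexOn ℝ (Set.Icc 0 1) (T a) := by
  refine ⟨convex_Icc 0 1, fun x hx y hy p q hp hq hpq => ?_⟩
  obtain rfl : q = 1 - p := by linarith
  exact (hTconv x hx y hy a ha p ⟨hp, by linarith⟩).2

variable (hT : IsTNorm T)
include hT

lemma IsTNorm.apply_zero_right {x : ℝ} (hx : x ∈ Set.Icc (0:ℝ) 1) : T x 0 = 0 := by
  have h0 : (0:ℝ) ∈ Set.Icc (0:ℝ) 1 := ⟨le_rfl, zero_le_one⟩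
  refine le_antisymm ?_ (hT.maps_to x hx 0 h0).1
  calc T x 0 ≤ T 1 0 := hT.mono x hx 1 ⟨zero_le_one, le_rfl⟩ 0 h0 0 h0 hx.2 le_rfl
    _ = 0 := hT.one_left 0 h0

lemma IsTNorm.residSet_nonempty {x y : ℝ} (hx : x ∈ Set.Icc (0:ℝ) 1) (hy : 0 ≤ y) :
    {l | l ∈ Set.Icc (0:ℝ) 1 ∧ T x l ≤ y}.Nonempty :=
  ⟨0, ⟨le_rfl, zero_le_one⟩, (hT.apply_zero_right hx).trans_le hy⟩

lemma IsTNorm.resid_mem {x y : ℝ} (hx : x ∈ Set.Icc (0:ℝ) 1) (hy : 0 ≤ y) :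
    resid T x y ∈ Set.Icc (0:ℝ) 1 :=
  ⟨le_csSup (bddAbove_residSet x y) ⟨⟨le_rfl, zero_le_one⟩, (hT.apply_zero_right hx).trans_le hy⟩,
    csSup_le (hT.residSet_nonempty hx hy) fun _ hl => hl.1.2⟩

lemma IsTNorm.resid_one {y : ℝ} (hy : y ∈ Set.Icc (0:ℝ) 1) : resid T 1 y = y :=
  le_antisymm
    (csSup_le (hT.residSet_nonempty ⟨zero_le_one, le_rfl⟩ hy.1) fun l ⟨hl, hly⟩ =>
      hT.one_left l hl ▸ hly)
    (le_csSup (bddAbove_residSet 1 y) ⟨hy, (hT.one_left y hy).le⟩)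

/-- Left-continuity is exactly what makes the supremum defining `resid` attained. -/
lemma IsTNorm.apply_resid_le (hTlc : LeftContinuousTNorm T) {x y : ℝ}
    (hx : x ∈ Set.Icc (0:ℝ) 1) (hy : 0 ≤ y) : T x (resid T x y) ≤ y := by
  rw [resid, hTlc x hx _ (hT.residSet_nonempty hx hy) fun _ hl => hl.1]
  exact csSup_le ((hT.residSet_nonempty hx hy).image _) fun _ ⟨_, hl, hlT⟩ => hlT ▸ hl.2

lemma IsTNorm.le_resid_iff (hTlc : LeftContinuousTNorm T) {x y c : ℝ}
    (hx : x ∈ Set.Icc (0:ℝ) 1) (hy : 0 ≤ y) (hc : c ∈ Set.Icc (0:ℝ) 1) :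
    c ≤ resid T x y ↔ T x c ≤ y :=
  ⟨fun h => (hT.mono x hx x hx c hc _ (hT.resid_mem hx hy) le_rfl h).trans
      (hT.apply_resid_le hTlc hx hy),
    fun h => le_csSup (bddAbove_residSet x y) ⟨hc, h⟩⟩

lemma IsTNorm.apply_resid_le_resid (hTlc : LeftContinuousTNorm T) {p q r a : ℝ}
    (hp : p ∈ Set.Icc (0:ℝ) 1) (hq : q ∈ Set.Icc (0:ℝ) 1) (hr : r ∈ Set.Icc (0:ℝ) 1)
    (ha : 0 ≤ a) (hpqr : T p q ≤ r) : T q (resid T r a) ≤ resid T p a := by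
  have hI := hT.resid_mem hr ha
  rw [hT.le_resid_iff hTlc hp ha (hT.maps_to q hq _ hI), ← hT.assoc p hp q hq _ hI]
  exact (hT.mono _ (hT.maps_to p hp q hq) r hr _ hI _ hI hpqr le_rfl).trans
    (hT.apply_resid_le hTlc hr ha)

lemma IsTNorm.apply_choquet_le (hTconv : DConvex T) {X : Type*} [Fintype X]
    {μ : Set X → ℝ} (hμ : IsMonotoneMeasure μ) {a : ℝ} (ha : a ∈ Set.Icc (0:ℝ) 1)
    {f g : X → ℝ} (hf : ∀ x, f x ∈ Set.Icc (0:ℝ) 1) (hg : ∀ x, g x ∈ Set.Icc (0:ℝ) 1)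
    (hfg : ∀ x, T a (f x) ≤ g x) : T a (choquet μ f) ≤ choquet μ g :=
  calc T a (choquet μ f) ≤ choquet μ (T a ∘ f) :=
        (hTconv.convexOn_right ha).map_choquet_le hμ
          (fun _ hs _ ht hst => hT.mono a ha a ha _ hs _ ht le_rfl hst)
          (fun _ hs => hT.maps_to a ha _ hs) hf
    _ ≤ choquet μ g := choquet_mono hμ (fun x => hT.maps_to a ha _ (hf x)) hg hfg

end TNorm

/-- the Choquet lower approximation is a fixed point of the classical
lower approximation. -/
theorem stmt5 {X : Type*} [Fintype X] [Nonempty X]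
    (T : ℝ → ℝ → ℝ) (hT : IsTNorm T) (hTlc : LeftContinuousTNorm T) (hTconv : DConvex T)
    (μ : Set X → ℝ) (hμ : IsMonotoneMeasure μ)
    (R : X → X → ℝ) (hR : IsTEquiv T R)
    (A : X → ℝ) (hA : ∀ x, A x ∈ Set.Icc (0:ℝ) 1) :
    ∀ y : X,
      Finset.univ.inf' Finset.univ_nonempty
          (fun x => resid T (R x y) (choquet μ (fun x' => resid T (R x' x) (A x'))))
        = choquet μ (fun x' => resid T (R x' y) (A x')) := by
  intro y
  have hI : ∀ x' z, resid T (R x' z) (A x') ∈ Set.Icc (0:ℝ) 1 :=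
    fun x' z => hT.resid_mem (hR.mem x' z) (hA x').1
  have hL : ∀ z, choquet μ (fun x' => resid T (R x' z) (A x')) ∈ Set.Icc (0:ℝ) 1 :=
    fun z => choquet_mem_Icc hμ (hI · z)
  refine le_antisymm ?_ (Finset.le_inf' _ _ fun x _ => ?_)
  · calc _ ≤ resid T (R y y) (choquet μ (fun x' => resid T (R x' y) (A x'))) :=
          Finset.inf'_le _ (mem_univ y)
      _ = _ := by rw [hR.refl, hT.resid_one (hL y)]
  · rw [hT.le_resid_iff hTlc (hR.mem x y) (hL x).1 (hL y)]
    exact hT.apply_choquet_le hTconv hμ (hR.mem x y) (hI · y) (hI · x) fun x' =>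
      hT.apply_resid_le_resid hTlc (hR.mem x' x) (hR.mem x y) (hR.mem x' y) (hA x').1
        (hR.trans x' x y)
end

section
/- Let T be a left-continuous t-norm, I its residual implicator, μ_l and μ_u monotone measures on a finite nonempty set X, and R a T-equivalence relation on X. For every fuzzy set A on X, the Sugeno lower approximation L(y) = ⨍ I(R(x,y), A(x)) dμ_l(x) and the Sugeno upper approximation U(y) = ⨍ T(R(x,y), A(x)) dμ_u(x) are both granularly representable fuzzy sets. -/
/-- The Sugeno integral of `f : X → ℝ` w.r.t. `μ` on the finite nonempty set `X`:
`max_i min(μ(A*_i), f(x*_i))` where `x*` enumerates `X` with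
`f(x*_1) ≤ … ≤ f(x*_n)` and `A*_i = {x*_i, …, x*_n}`. -/
noncomputable def sugeno {X : Type*} [Fintype X] [Nonempty X] (μ : Set X → ℝ) (f : X → ℝ) : ℝ :=
  let e : Fin (Fintype.card X) ≃ X := (Fintype.equivFin X).symm
  let σ : Equiv.Perm (Fin (Fintype.card X)) := Tuple.sort (f ∘ e)
  haveI : Nonempty (Fin (Fintype.card X)) := Fin.pos_iff_nonempty.mp Fintype.card_pos
  Finset.univ.sup' Finset.univ_nonempty
    (fun i => min (μ {x | ∃ j, i ≤ j ∧ e (σ j) = x}) (f (e (σ i))))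

/-- `A` is granularly representable w.r.t. `T` and `R`: for every `y`,
`A(y)` is the supremum of the values `T(λ, R(x,y))` over all granules
`R_λ(x) = (z ↦ T(λ, R(x,z)))` that are (pointwise) contained in `A`. -/
def GranRep {X : Type*} (T : ℝ → ℝ → ℝ) (R : X → X → ℝ) (A : X → ℝ) : Prop :=
  ∀ y, A y = sSup {v | ∃ l ∈ Set.Icc (0:ℝ) 1, ∃ x, (∀ z, T l (R x z) ≤ A z) ∧ v = T l (R x y)}

namespace IsTNorm

variable {T : ℝ → ℝ → ℝ}

lemma map_one_right (hT : IsTNorm T) {x : ℝ} (hx : x ∈ Set.Icc (0:ℝ) 1) : T x 1 = x := by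
  rw [hT.comm x hx 1 (by norm_num), hT.one_left x hx]

lemma le_left (hT : IsTNorm T) {x y : ℝ} (hx : x ∈ Set.Icc (0:ℝ) 1)
    (hy : y ∈ Set.Icc (0:ℝ) 1) : T x y ≤ x := by
  simpa [hT.map_one_right hx] using hT.mono x hx x hx y hy 1 (by norm_num) le_rfl hy.2

lemma map_zero_right (hT : IsTNorm T) {x : ℝ} (hx : x ∈ Set.Icc (0:ℝ) 1) : T x 0 = 0 := by
  have h0 : (0:ℝ) ∈ Set.Icc (0:ℝ) 1 := by norm_num
  rw [hT.comm x hx 0 h0]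
  exact le_antisymm (hT.le_left h0 hx) (hT.maps_to 0 h0 x hx).1

lemma map_min_le (hT : IsTNorm T) {a b r : ℝ} (ha : a ∈ Set.Icc (0:ℝ) 1)
    (hb : b ∈ Set.Icc (0:ℝ) 1) (hr : r ∈ Set.Icc (0:ℝ) 1) :
    T (min a b) r ≤ min a (T b r) := by
  have hab : min a b ∈ Set.Icc (0:ℝ) 1 := ⟨le_min ha.1 hb.1, (min_le_left a b).trans ha.2⟩
  exact le_min ((hT.le_left hab hr).trans (min_le_left a b))
    (hT.mono _ hab _ hb r hr r hr (min_le_right a b) le_rfl)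

lemma zero_mem_resid_set (hT : IsTNorm T) {a b : ℝ} (ha : a ∈ Set.Icc (0:ℝ) 1) (hb : 0 ≤ b) :
    (0:ℝ) ∈ {l | l ∈ Set.Icc (0:ℝ) 1 ∧ T a l ≤ b} :=
  ⟨by norm_num, by rwa [hT.map_zero_right ha]⟩

lemma resid_mem_Icc (hT : IsTNorm T) {a b : ℝ} (ha : a ∈ Set.Icc (0:ℝ) 1) (hb : 0 ≤ b) :
    resid T a b ∈ Set.Icc (0:ℝ) 1 :=
  ⟨le_csSup ⟨1, fun _ hl => hl.1.2⟩ (hT.zero_mem_resid_set ha hb),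
    csSup_le ⟨0, hT.zero_mem_resid_set ha hb⟩ fun _ hl => hl.1.2⟩

lemma map_resid_le (hT : IsTNorm T) (hTlc : LeftContinuousTNorm T) {a b : ℝ}
    (ha : a ∈ Set.Icc (0:ℝ) 1) (hb : 0 ≤ b) : T a (resid T a b) ≤ b := by
  have h0 := hT.zero_mem_resid_set ha hb
  rw [resid, hTlc a ha _ ⟨0, h0⟩ fun _ hl => hl.1]
  exact csSup_le (Set.Nonempty.image _ ⟨0, h0⟩) (by rintro v ⟨l, hl, rfl⟩; exact hl.2)

end IsTNorm

lemma le_resid {T : ℝ → ℝ → ℝ} {a b l : ℝ} (hl : l ∈ Set.Icc (0:ℝ) 1) (h : T a l ≤ b) :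
    l ≤ resid T a b :=
  le_csSup ⟨1, fun _ hm => hm.1.2⟩ ⟨hl, h⟩

lemma IsMonotoneMeasure.mem_Icc {X : Type*} {μ : Set X → ℝ} (hμ : IsMonotoneMeasure μ)
    (E : Set X) : μ E ∈ Set.Icc (0:ℝ) 1 :=
  ⟨hμ.empty ▸ hμ.mono _ _ (Set.empty_subset E), hμ.univ ▸ hμ.mono _ _ (Set.subset_univ E)⟩

section Sugeno

variable {X : Type*} [Fintype X] [Nonempty X]

lemma exists_sugeno_eq_min (μ : Set X → ℝ) (f : X → ℝ) :
    ∃ (E : Set X) (x₀ : X), x₀ ∈ E ∧ sugeno μ f = min (μ E) (f x₀) ∧ ∀ x ∈ E, f x₀ ≤ f x := by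
  have : Nonempty (Fin (Fintype.card X)) := Fin.pos_iff_nonempty.mp Fintype.card_pos
  set e : Fin (Fintype.card X) ≃ X := (Fintype.equivFin X).symm
  set σ : Equiv.Perm (Fin (Fintype.card X)) := Tuple.sort (f ∘ e)
  obtain ⟨i, -, hi⟩ := Finset.exists_mem_eq_sup' Finset.univ_nonempty
    (fun i => min (μ {x | ∃ j, i ≤ j ∧ e (σ j) = x}) (f (e (σ i))))
  refine ⟨{x | ∃ j, i ≤ j ∧ e (σ j) = x}, e (σ i), ⟨i, le_rfl, rfl⟩, hi, ?_⟩
  rintro x ⟨j, hij, rfl⟩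
  exact Tuple.monotone_sort (f ∘ e) hij

lemma min_le_sugeno {μ : Set X → ℝ} (hμ : IsMonotoneMeasure μ) (f : X → ℝ) {E : Set X}
    {c : ℝ} (hE : E.Nonempty) (hc : ∀ x ∈ E, c ≤ f x) : min (μ E) c ≤ sugeno μ f := by
  classical
  have : Nonempty (Fin (Fintype.card X)) := Fin.pos_iff_nonempty.mp Fintype.card_pos
  set e : Fin (Fintype.card X) ≃ X := (Fintype.equivFin X).symm
  set σ : Equiv.Perm (Fin (Fintype.card X)) := Tuple.sort (f ∘ e)
  set F := Finset.univ.filter fun i => e (σ i) ∈ E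
  have hF : F.Nonempty := by
    obtain ⟨x, hx⟩ := hE
    exact ⟨σ.symm (e.symm x), by simp [F, hx]⟩
  set i₀ := F.min' hF
  have hi₀ : e (σ i₀) ∈ E := by simpa [F] using F.min'_mem hF
  have hE_sub : E ⊆ {x | ∃ j, i₀ ≤ j ∧ e (σ j) = x} := fun x hx =>
    ⟨σ.symm (e.symm x), F.min'_le _ (by simp [F, hx]), by simp⟩
  calc min (μ E) c
      ≤ min (μ {x | ∃ j, i₀ ≤ j ∧ e (σ j) = x}) (f (e (σ i₀))) :=
        min_le_min (hμ.mono _ _ hE_sub) (hc _ hi₀)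
    _ ≤ sugeno μ f := Finset.le_sup'
        (fun i => min (μ {x | ∃ j, i ≤ j ∧ e (σ j) = x}) (f (e (σ i)))) (Finset.mem_univ i₀)

lemma sugeno_mem_Icc {μ : Set X → ℝ} (hμ : IsMonotoneMeasure μ) {f : X → ℝ}
    (hf : ∀ x, f x ∈ Set.Icc (0:ℝ) 1) : sugeno μ f ∈ Set.Icc (0:ℝ) 1 := by
  obtain ⟨E, x₀, -, hEq, -⟩ := exists_sugeno_eq_min μ f
  rw [hEq]
  exact ⟨le_min (hμ.mem_Icc E).1 (hf x₀).1, (min_le_right _ _).trans (hf x₀).2⟩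

lemma map_sugeno_le_sugeno {T : ℝ → ℝ → ℝ} (hT : IsTNorm T) {μ : Set X → ℝ}
    (hμ : IsMonotoneMeasure μ) {f g : X → ℝ} (hf : ∀ x, f x ∈ Set.Icc (0:ℝ) 1) {r : ℝ}
    (hr : r ∈ Set.Icc (0:ℝ) 1) (hfg : ∀ x, T (f x) r ≤ g x) :
    T (sugeno μ f) r ≤ sugeno μ g := by
  obtain ⟨E, x₀, hx₀, hEq, hmin⟩ := exists_sugeno_eq_min μ f
  have hg : ∀ x ∈ E, T (f x₀) r ≤ g x := fun x hx =>
    (hT.mono _ (hf x₀) _ (hf x) r hr r hr (hmin x hx) le_rfl).trans (hfg x)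
  rw [hEq]
  exact (hT.map_min_le (hμ.mem_Icc E) (hf x₀) hr).trans (min_le_sugeno hμ g ⟨x₀, hx₀⟩ hg)

end Sugeno

section Approximations

variable {X : Type*} {T : ℝ → ℝ → ℝ} {R : X → X → ℝ}

lemma granRep_of_extensional (hT : IsTNorm T) (hrefl : ∀ x, R x x = 1) {B : X → ℝ}
    (hB : ∀ y, B y ∈ Set.Icc (0:ℝ) 1) (hext : ∀ x z, T (B x) (R x z) ≤ B z) :
    GranRep T R B := by
  intro y
  set S := {v | ∃ l ∈ Set.Icc (0:ℝ) 1, ∃ x, (∀ z, T l (R x z) ≤ B z) ∧ v = T l (R x y)}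
  have hmem : B y ∈ S := ⟨B y, hB y, y, hext y, by rw [hrefl y, hT.map_one_right (hB y)]⟩
  have hub : ∀ v ∈ S, v ≤ B y := by
    rintro v ⟨l, -, x, hx, rfl⟩
    exact hx y
  exact le_antisymm (le_csSup ⟨B y, hub⟩ hmem) (csSup_le ⟨_, hmem⟩ hub)

lemma resid_extensional (hT : IsTNorm T) (hTlc : LeftContinuousTNorm T) (hR : IsTEquiv T R)
    {a : ℝ} (ha : 0 ≤ a) (x y z : X) :
    T (resid T (R x y) a) (R y z) ≤ resid T (R x z) a := by
  set l := resid T (R x y) a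
  have hl : l ∈ Set.Icc (0:ℝ) 1 := hT.resid_mem_Icc (hR.mem x y) ha
  refine le_resid (hT.maps_to _ hl _ (hR.mem y z)) ?_
  calc T (R x z) (T l (R y z))
      = T (T (R x z) (R y z)) l := by
        rw [hT.comm l hl _ (hR.mem y z), hT.assoc _ (hR.mem x z) _ (hR.mem y z) l hl]
    _ ≤ T (R x y) l := by
        refine hT.mono _ (hT.maps_to _ (hR.mem x z) _ (hR.mem y z)) _ (hR.mem x y) l hl l hl
          ?_ le_rfl
        simpa only [hR.symm z y] using hR.trans x z y
    _ ≤ a := hT.map_resid_le hTlc (hR.mem x y) ha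

lemma map_extensional (hT : IsTNorm T) (hR : IsTEquiv T R) {a : ℝ}
    (ha : a ∈ Set.Icc (0:ℝ) 1) (x y z : X) :
    T (T (R x y) a) (R y z) ≤ T (R x z) a := by
  calc T (T (R x y) a) (R y z)
      = T a (T (R x y) (R y z)) := by
        rw [hT.comm _ (hR.mem x y) _ ha, hT.assoc _ ha _ (hR.mem x y) _ (hR.mem y z)]
    _ ≤ T a (R x z) := hT.mono _ ha _ ha _ (hT.maps_to _ (hR.mem x y) _ (hR.mem y z)) _
        (hR.mem x z) le_rfl (hR.trans x y z)
    _ = T (R x z) a := hT.comm _ ha _ (hR.mem x z)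

end Approximations

/-- the Sugeno lower and upper approximations are granularly representable. -/
theorem stmt12 {X : Type*} [Fintype X] [Nonempty X]
    (T : ℝ → ℝ → ℝ) (hT : IsTNorm T) (hTlc : LeftContinuousTNorm T)
    (μl μu : Set X → ℝ) (hμl : IsMonotoneMeasure μl) (hμu : IsMonotoneMeasure μu)
    (R : X → X → ℝ) (hR : IsTEquiv T R)
    (A : X → ℝ) (hA : ∀ x, A x ∈ Set.Icc (0:ℝ) 1) :
    GranRep T R (fun y => sugeno μl (fun x => resid T (R x y) (A x))) ∧
    GranRep T R (fun y => sugeno μu (fun x => T (R x y) (A x))) := by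
  have hresid : ∀ y x, resid T (R x y) (A x) ∈ Set.Icc (0:ℝ) 1 := fun y x =>
    hT.resid_mem_Icc (hR.mem x y) (hA x).1
  have hmap : ∀ y x, T (R x y) (A x) ∈ Set.Icc (0:ℝ) 1 := fun y x =>
    hT.maps_to _ (hR.mem x y) _ (hA x)
  constructor
  · refine granRep_of_extensional hT hR.refl (fun y => sugeno_mem_Icc hμl (hresid y))
      fun y z => map_sugeno_le_sugeno hT hμl (hresid y) (hR.mem y z) fun x => ?_
    exact resid_extensional hT hTlc hR (hA x).1 x y z
  · refine granRep_of_extensional hT hR.refl (fun y => sugeno_mem_Icc hμu (hmap y))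
      fun y z => map_sugeno_le_sugeno hT hμu (hmap y) (hR.mem y z) fun x => ?_
    exact map_extensional hT hR (hA x) x y z
end

section
/- (Non-granularity of the WOWAS lower approximation.) Let X = {x₁,…,x₅}, a = (0.8, 0, 0, 0, 1), R(x,y) = 1 − |a(x) − a(y)| (a T_L-equivalence relation), and A = (1, 1, 0.5, 0.5, 0). For y ∈ X let g_y(x) = I_L(R(x,y), A(x)), let C_y(x) = R(x,y), and define the WOWAS lower approximation of A with identity RIM quantifier by L(y) = ⨍ g_y dμ_{C_y}, the Sugeno integral of g_y w.r.t. the monotone measure μ_{C_y}(E) = (Σ_{x∈E} C_y(x)) / (Σ_{x∈X} C_y(x)). Then L = (2/3, 1/2, 1/2, 1/2, 4/9), while min_{x∈X} I_L(R(x,x₁), L(x)) = 29/45 ≠ 2/3 = L(x₁); hence L is not a fixed point of the classical lower approximation and in particular L is not granularly representable w.r.t. R. -/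
/-! The Sugeno integral with respect to a monotone measure is `max_x min (μ {y | f x ≤ f y}) (f x)`,
so each value of the WOWAS lower approximation `L` is a finite max–min computation.
For a `T_L`-equivalence relation, transitivity and residuation put every granule contained in `B`
below the classical lower approximation of `B`; hence a granularly representable set is a fixed
point of the classical lower approximation. `L` is not: its lower approximation at `x₁` is
`29/45 < 2/3 = L x₁`. -/

/-- The Łukasiewicz t-norm. -/
noncomputable def TL (x y : ℝ) : ℝ := max 0 (x + y - 1)

/-- The Łukasiewicz (residual) implicator. -/
noncomputable def IL (x y : ℝ) : ℝ := min 1 (1 - x + y)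

lemma sugeno_eq_sup'_min {X : Type*} [Fintype X] [Nonempty X] {μ : Set X → ℝ}
    (hμ : Monotone μ) (f : X → ℝ) :
    sugeno μ f = Finset.univ.sup' Finset.univ_nonempty
      fun x => min (μ {y | f x ≤ f y}) (f x) := by
  unfold sugeno
  set e : Fin (Fintype.card X) ≃ X := (Fintype.equivFin X).symm
  set σ : Equiv.Perm (Fin (Fintype.card X)) := Tuple.sort (f ∘ e)
  have hsorted : Monotone fun i => f (e (σ i)) := Tuple.monotone_sort (f ∘ e)
  have he : ∀ y, e (σ (σ⁻¹ (e.symm y))) = y := by simp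
  apply le_antisymm
  · refine Finset.sup'_le _ _ fun i _ => ?_
    refine le_trans ?_ (Finset.le_sup' _ (Finset.mem_univ (e (σ i))))
    refine min_le_min_right _ (hμ ?_)
    rintro y ⟨j, hij, rfl⟩
    exact hsorted hij
  · refine Finset.sup'_le _ _ fun x _ => ?_
    -- because of ties, use the first sorted position whose value reaches `f x`,
    -- so that its tail `A*_i` contains every `y` with `f x ≤ f y`
    obtain ⟨i, hi, hmin⟩ := (Finset.univ.filter fun j => f x ≤ f (e (σ j))).exists_min_image id
      ⟨σ⁻¹ (e.symm x), by simp⟩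
    simp only [Finset.mem_filter, Finset.mem_univ, true_and, id] at hi hmin
    refine le_trans ?_ (Finset.le_sup' (fun i => min (μ {x | ∃ j, i ≤ j ∧ e (σ j) = x})
      (f (e (σ i)))) (Finset.mem_univ i))
    refine min_le_min (hμ fun y hy => ⟨σ⁻¹ (e.symm y), hmin _ ?_, he y⟩) hi
    simpa using hy

lemma sugeno_weighted_eq_sup' {X : Type*} [Fintype X] [Nonempty X] {w : X → ℝ}
    (hw : ∀ x, 0 ≤ w x) (f : X → ℝ) :
    sugeno (fun E => (∑ x ∈ E.toFinite.toFinset, w x) / ∑ x, w x) f =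
      Finset.univ.sup' Finset.univ_nonempty
        fun x => min ((∑ y, if f x ≤ f y then w y else 0) / ∑ y, w y) (f x) := by
  have hμ : Monotone fun E : Set X => (∑ x ∈ E.toFinite.toFinset, w x) / ∑ x, w x :=
    fun E F hEF => div_le_div_of_nonneg_right
      (Finset.sum_le_sum_of_subset_of_nonneg (Set.Finite.toFinset_subset_toFinset.mpr hEF)
        fun x _ _ => hw x)
      (Finset.sum_nonneg fun x _ => hw x)
  rw [sugeno_eq_sup'_min hμ]
  simp only [Set.Finite.toFinset_ofPred, Finset.sum_filter]

lemma isTEquiv_TL_one_sub_abs_sub {X : Type*} {a : X → ℝ} (ha : ∀ x, a x ∈ Set.Icc (0:ℝ) 1) :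
    IsTEquiv TL fun x y => 1 - |a x - a y| := by
  have hdist : ∀ x y, |a x - a y| ≤ 1 := fun x y =>
    abs_sub_le_iff.mpr ⟨by linarith [(ha x).2, (ha y).1], by linarith [(ha x).1, (ha y).2]⟩
  refine ⟨fun x y => ⟨?_, ?_⟩, fun x => ?_, fun x y => ?_, fun x y z => ?_⟩
  · linarith [hdist x y]
  · linarith [abs_nonneg (a x - a y)]
  · simp
  · rw [abs_sub_comm]
  · exact max_le (by linarith [hdist x z]) (by linarith [abs_sub_le (a x) (a y) (a z)])

noncomputable def lowerApprox {X : Type*} [Fintype X] [Nonempty X] (R : X → X → ℝ) (B : X → ℝ)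
    (y : X) : ℝ :=
  Finset.univ.inf' Finset.univ_nonempty fun x => IL (R x y) (B x)

section Granular

variable {X : Type*} {R : X → X → ℝ} {B : X → ℝ}

lemma GranRep.nonneg (hB : GranRep TL R B) (z : X) : 0 ≤ B z :=
  (hB z).symm ▸ Real.sSup_nonneg (by rintro _ ⟨l, -, x, -, rfl⟩; exact le_max_left _ _)

variable [Fintype X] [Nonempty X]

lemma IsTEquiv.lowerApprox_le (hR : IsTEquiv TL R) (y : X) : lowerApprox R B y ≤ B y :=
  (Finset.inf'_le _ (Finset.mem_univ y)).trans (by simp [IL, hR.refl])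

-- `T_L(R_l(x)(y), R(y,z)) ≤ R_l(x)(z) ≤ B z` by transitivity, then residuate.
lemma IsTEquiv.TL_le_lowerApprox (hR : IsTEquiv TL R) {l : ℝ} (hl : l ≤ 1) {x : X}
    (hsub : ∀ z, TL l (R x z) ≤ B z) (y : X) : TL l (R x y) ≤ lowerApprox R B y := by
  refine Finset.le_inf' _ _ fun z _ => ?_
  have htrans := (le_max_right _ _).trans (hR.trans x y z)
  have hBz := hsub z
  simp only [TL, IL, max_le_iff] at htrans hBz ⊢
  rw [hR.symm z y]
  have hxy := (hR.mem x y).2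
  have hyz := (hR.mem y z).2
  exact ⟨le_min zero_le_one (by linarith), le_min (by linarith) (by linarith)⟩

lemma GranRep.lowerApprox_eq (hR : IsTEquiv TL R) (hB : GranRep TL R B) : lowerApprox R B = B := by
  funext y
  refine le_antisymm (hR.lowerApprox_le y) ?_
  have hnonneg : 0 ≤ lowerApprox R B y :=
    Finset.le_inf' _ _ fun z _ => le_min zero_le_one (by linarith [(hR.mem z y).2, hB.nonneg z])
  calc B y = _ := hB y
    _ ≤ lowerApprox R B y := Real.sSup_le
      (by rintro _ ⟨l, hl, x, hsub, rfl⟩; exact hR.TL_le_lowerApprox hl.2 hsub y) hnonneg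

end Granular

section Example

noncomputable def exampleRelation : Fin 5 → Fin 5 → ℝ :=
  ![![1, 1/5, 1/5, 1/5, 4/5], ![1/5, 1, 1, 1, 0], ![1/5, 1, 1, 1, 0], ![1/5, 1, 1, 1, 0],
    ![4/5, 0, 0, 0, 1]]

lemma one_sub_abs_sub_eq_exampleRelation :
    (fun x y => 1 - |(![4/5, 0, 0, 0, 1] : Fin 5 → ℝ) x - ![4/5, 0, 0, 0, 1] y|) =
      exampleRelation := by
  funext x y
  fin_cases x <;> fin_cases y <;> norm_num [exampleRelation, abs_of_nonneg, abs_of_nonpos]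

lemma IL_exampleRelation (y : Fin 5) :
    (fun x => IL (exampleRelation x y) (![1, 1, 1/2, 1/2, 0] x)) =
      ![![1, 1, 1, 1, 1/5], ![1, 1, 1/2, 1/2, 1], ![1, 1, 1/2, 1/2, 1], ![1, 1, 1/2, 1/2, 1],
        ![1, 1, 1, 1, 0]] y := by
  funext x
  fin_cases x <;> fin_cases y <;> norm_num [exampleRelation, IL]

lemma sugeno_exampleRelation (y : Fin 5) :
    sugeno (fun E => (∑ x ∈ E.toFinite.toFinset, exampleRelation x y) / ∑ x, exampleRelation x y)
      (![![1, 1, 1, 1, 1/5], ![1, 1, 1/2, 1/2, 1], ![1, 1, 1/2, 1/2, 1], ![1, 1, 1/2, 1/2, 1],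
        ![1, 1, 1, 1, 0]] y) = ![2/3, 1/2, 1/2, 1/2, 4/9] y := by
  rw [sugeno_weighted_eq_sup' fun x => ?_]
  · simp only [Fin.sum_univ_five]
    fin_cases y <;> simp [exampleRelation, Fin.univ_succ] <;> norm_num
  · fin_cases x <;> fin_cases y <;> norm_num [exampleRelation]

lemma lowerApprox_exampleRelation :
    lowerApprox exampleRelation ![2/3, 1/2, 1/2, 1/2, 4/9] 0 = 29/45 := by
  simp [lowerApprox, exampleRelation, Fin.univ_succ, IL]
  norm_num

end Example

/-- the WOWAS lower approximation (identity RIM quantifier) of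
`A = (1,1,0.5,0.5,0)` w.r.t. the given `T_L`-equivalence relation on a 5-element set
equals `(2/3, 1/2, 1/2, 1/2, 4/9)` and is neither a fixed point of the classical lower
approximation nor granularly representable. -/
theorem stmt18 :
    let a : Fin 5 → ℝ := ![4/5, 0, 0, 0, 1]
    let R : Fin 5 → Fin 5 → ℝ := fun x y => 1 - |a x - a y|
    let A : Fin 5 → ℝ := ![1, 1, 1/2, 1/2, 0]
    let L : Fin 5 → ℝ := fun y =>
      sugeno (fun E => (∑ x ∈ E.toFinite.toFinset, R x y) / (∑ x, R x y))
        (fun x => IL (R x y) (A x))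
    IsTEquiv TL R ∧
    L = ![2/3, 1/2, 1/2, 1/2, 4/9] ∧
    Finset.univ.inf' Finset.univ_nonempty (fun x => IL (R x 0) (L x)) = 29/45 ∧
    L 0 = 2/3 ∧
    Finset.univ.inf' Finset.univ_nonempty (fun x => IL (R x 0) (L x)) ≠ L 0 ∧
    ¬ GranRep TL R L := by
  intro a R A L
  have hR : IsTEquiv TL R := isTEquiv_TL_one_sub_abs_sub fun x => by
    fin_cases x <;> norm_num [a]
  have hRval : R = exampleRelation := one_sub_abs_sub_eq_exampleRelation
  have hL : L = ![2/3, 1/2, 1/2, 1/2, 4/9] := by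
    funext y
    simp only [L, hRval, A, IL_exampleRelation, sugeno_exampleRelation]
  have hlower : lowerApprox R L 0 = 29/45 := by
    rw [hL, hRval, lowerApprox_exampleRelation]
  refine ⟨hR, hL, hlower, by simp [hL], hlower.trans_ne (by simp [hL]; norm_num), fun hgran => ?_⟩
  have hfixed := congrFun (hgran.lowerApprox_eq hR) 0
  rw [hlower, hL] at hfixed
  norm_num at hfixed
end
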